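/- arXiv:2111.05509 — 5 statements merged into one kernel-verified Lean document; each statement's English description precedes it below -/
import Mathlib

section
/- Let Σ ∈ ℝ^{(T+1)n_x×(T+1)n_x} be block-lower-triangular and invertible, and let K ∈ ℝ^{(T+1)n_u×(T+1)n_x} be block-lower-triangular. Then Z(𝒜 + ℬK) is nilpotent (indeed (Z(𝒜+ℬK))^{T+1} = 0), so I − Z(𝒜 + ℬK) is invertible; moreover the matrices Φ̃x := (I − Z(𝒜+ℬK))^{-1}Σ and Φ̃u := KΦ̃x are block-lower-triangular and satisfy (I − Z𝒜)Φ̃x − ZℬΦ̃u = Σ. -/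
/-! Both `Z` and `Z(𝒜 + ℬK)` are strictly block-lower-triangular, so the `k`-th power of the
latter vanishes on all blocks less than `k` steps below the diagonal; hence its `(T+1)`-st power
is zero and `(I - Z(𝒜 + ℬK))⁻¹` is the finite geometric series in it, a sum of
block-lower-triangular matrices. The final identity is `(I - Z(𝒜 + ℬK)) Φ̃x = Σ` rearranged. -/

open Matrix Finset

noncomputable section

/-- A `(T+1)×(T+1)`-block matrix (with `p×q` blocks) is block-lower-triangular if its
`(i,j)` block vanishes whenever `j > i`. -/
def IsBLT {T p q : ℕ} (M : Matrix (Fin (T+1) × Fin p) (Fin (T+1) × Fin q) ℝ) : Prop :=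
  ∀ (i j : Fin (T+1)) (a : Fin p) (b : Fin q), i < j → M (i, a) (j, b) = 0

/-- The block-downshift matrix `Z`: its `(i,j)` block is the identity if `i = j+1`,
and zero otherwise. -/
def dshift (T n : ℕ) : Matrix (Fin (T+1) × Fin n) (Fin (T+1) × Fin n) ℝ :=
  Matrix.of fun i j => if ((i.1 : ℕ) = (j.1 : ℕ) + 1 ∧ i.2 = j.2) then (1 : ℝ) else 0

/-- `blkdiag(M, …, M, 0)`: `T` copies of `M` on the block diagonal followed by one zero block. -/
def blkDiag {p q : ℕ} (T : ℕ) (M : Matrix (Fin p) (Fin q) ℝ) :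
    Matrix (Fin (T+1) × Fin p) (Fin (T+1) × Fin q) ℝ :=
  Matrix.of fun i j => if (i.1 = j.1 ∧ (i.1 : ℕ) < T) then M i.2 j.2 else 0

theorem Matrix.inv_one_sub_eq_geom_sum {n R : Type*} [Fintype n] [DecidableEq n] [CommRing R]
    {N : Matrix n n R} {k : ℕ} (hN : N ^ k = 0) : (1 - N)⁻¹ = ∑ i ∈ range k, N ^ i :=
  inv_eq_right_inv (by rw [mul_neg_geom_sum, hN, sub_zero])

def IsSBLT {T p q : ℕ} (M : Matrix (Fin (T+1) × Fin p) (Fin (T+1) × Fin q) ℝ) : Prop :=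
  ∀ (i j : Fin (T+1)) (a : Fin p) (b : Fin q), i ≤ j → M (i, a) (j, b) = 0

section BlockTriangular

variable {T p q r : ℕ}

theorem IsSBLT.isBLT {M : Matrix (Fin (T+1) × Fin p) (Fin (T+1) × Fin q) ℝ} (hM : IsSBLT M) :
    IsBLT M :=
  fun i j a b hij => hM i j a b hij.le

theorem isBLT_one : IsBLT (1 : Matrix (Fin (T+1) × Fin p) (Fin (T+1) × Fin p) ℝ) :=
  fun _ _ _ _ hij => one_apply_ne fun h => hij.ne (congrArg Prod.fst h)

theorem IsBLT.add {M N : Matrix (Fin (T+1) × Fin p) (Fin (T+1) × Fin q) ℝ}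
    (hM : IsBLT M) (hN : IsBLT N) : IsBLT (M + N) := by
  intro i j a b hij
  rw [Matrix.add_apply, hM i j a b hij, hN i j a b hij, add_zero]

theorem IsBLT.sum {ι : Type*} {s : Finset ι}
    {M : ι → Matrix (Fin (T+1) × Fin p) (Fin (T+1) × Fin q) ℝ} (hM : ∀ k ∈ s, IsBLT (M k)) :
    IsBLT (∑ k ∈ s, M k) := by
  intro i j a b hij
  rw [Matrix.sum_apply]
  exact sum_eq_zero fun k hk => hM k hk i j a b hij

theorem IsBLT.mul {M : Matrix (Fin (T+1) × Fin p) (Fin (T+1) × Fin q) ℝ}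
    {N : Matrix (Fin (T+1) × Fin q) (Fin (T+1) × Fin r) ℝ}
    (hM : IsBLT M) (hN : IsBLT N) : IsBLT (M * N) := by
  intro i j a b hij
  rw [mul_apply]
  refine sum_eq_zero fun ⟨k, c⟩ _ => ?_
  rcases lt_or_ge i k with hik | hki
  · rw [hM i k a c hik, zero_mul]
  · rw [hN k j c b (hki.trans_lt hij), mul_zero]

theorem IsSBLT.mul {M : Matrix (Fin (T+1) × Fin p) (Fin (T+1) × Fin q) ℝ}
    {N : Matrix (Fin (T+1) × Fin q) (Fin (T+1) × Fin r) ℝ}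
    (hM : IsSBLT M) (hN : IsBLT N) : IsSBLT (M * N) := by
  intro i j a b hij
  rw [mul_apply]
  refine sum_eq_zero fun ⟨k, c⟩ _ => ?_
  rcases le_or_gt i k with hik | hki
  · rw [hM i k a c hik, zero_mul]
  · rw [hN k j c b (hki.trans_le hij), mul_zero]

theorem IsBLT.pow {M : Matrix (Fin (T+1) × Fin p) (Fin (T+1) × Fin p) ℝ} (hM : IsBLT M)
    (k : ℕ) : IsBLT (M ^ k) := by
  induction k with
  | zero => exact pow_zero M ▸ isBLT_one
  | succ k ih => exact pow_succ M k ▸ ih.mul hM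

theorem IsSBLT.pow_apply_eq_zero {N : Matrix (Fin (T+1) × Fin p) (Fin (T+1) × Fin p) ℝ}
    (hN : IsSBLT N) (k : ℕ) {i j : Fin (T+1)} (a b : Fin p) (hij : (i : ℕ) < j + k) :
    (N ^ k) (i, a) (j, b) = 0 := by
  induction k generalizing i a with
  | zero =>
    refine (pow_zero N).symm ▸ one_apply_ne fun h => ?_
    rw [(Prod.mk.inj h).1] at hij
    omega
  | succ k ih =>
    rw [pow_succ', mul_apply]
    refine sum_eq_zero fun ⟨l, c⟩ _ => ?_
    rcases le_or_gt i l with hil | hli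
    · rw [hN i l a c hil, zero_mul]
    · rw [ih c (by omega), mul_zero]

theorem IsSBLT.pow_succ_eq_zero {N : Matrix (Fin (T+1) × Fin p) (Fin (T+1) × Fin p) ℝ}
    (hN : IsSBLT N) : N ^ (T + 1) = 0 := by
  ext ⟨i, a⟩ ⟨j, b⟩
  exact hN.pow_apply_eq_zero (T + 1) a b (by omega)

theorem isSBLT_dshift {n : ℕ} : IsSBLT (dshift T n) := by
  intro i j a b hij
  rw [dshift, of_apply, if_neg]
  rintro ⟨h, -⟩
  simp only at h
  omega

theorem isBLT_blkDiag (M : Matrix (Fin p) (Fin q) ℝ) : IsBLT (blkDiag T M) := by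
  intro i j a b hij
  rw [blkDiag, of_apply, if_neg]
  rintro ⟨h, -⟩
  exact hij.ne h

end BlockTriangular

theorem statement0_general (nx nu T : ℕ)
    (Ahat : Matrix (Fin nx) (Fin nx) ℝ) (Bhat : Matrix (Fin nx) (Fin nu) ℝ)
    (Sig : Matrix (Fin (T+1) × Fin nx) (Fin (T+1) × Fin nx) ℝ)
    (K : Matrix (Fin (T+1) × Fin nu) (Fin (T+1) × Fin nx) ℝ)
    (hSigBLT : IsBLT Sig) (hKBLT : IsBLT K) :
    (dshift T nx * (blkDiag T Ahat + blkDiag T Bhat * K)) ^ (T+1) = 0 ∧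
    IsUnit (1 - dshift T nx * (blkDiag T Ahat + blkDiag T Bhat * K)) ∧
    IsBLT ((1 - dshift T nx * (blkDiag T Ahat + blkDiag T Bhat * K))⁻¹ * Sig) ∧
    IsBLT (K * ((1 - dshift T nx * (blkDiag T Ahat + blkDiag T Bhat * K))⁻¹ * Sig)) ∧
    (1 - dshift T nx * blkDiag T Ahat) *
        ((1 - dshift T nx * (blkDiag T Ahat + blkDiag T Bhat * K))⁻¹ * Sig) -
      dshift T nx * blkDiag T Bhat *
        (K * ((1 - dshift T nx * (blkDiag T Ahat + blkDiag T Bhat * K))⁻¹ * Sig)) = Sig := by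
  set N := dshift T nx * (blkDiag T Ahat + blkDiag T Bhat * K)
  have hN : IsSBLT N :=
    isSBLT_dshift.mul ((isBLT_blkDiag Ahat).add ((isBLT_blkDiag Bhat).mul hKBLT))
  have hnil : N ^ (T + 1) = 0 := hN.pow_succ_eq_zero
  have hunit : IsUnit (1 - N) := IsNilpotent.isUnit_one_sub ⟨T + 1, hnil⟩
  have hΦx : IsBLT ((1 - N)⁻¹ * Sig) := by
    rw [inv_one_sub_eq_geom_sum hnil]
    exact (IsBLT.sum fun k _ => hN.isBLT.pow k).mul hSigBLT
  refine ⟨hnil, hunit, hΦx, hKBLT.mul hΦx, ?_⟩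
  have hloop : ∀ P, (1 - dshift T nx * blkDiag T Ahat) * P - dshift T nx * blkDiag T Bhat * (K * P)
      = (1 - N) * P := by
    intro P
    simp only [N, sub_mul, one_mul, mul_add, add_mul, Matrix.mul_assoc]
    abel
  rw [hloop, ← Matrix.mul_assoc, mul_nonsing_inv _ ((isUnit_iff_isUnit_det _).mp hunit), one_mul]

theorem statement0 (nx nu T : ℕ) (hnx : 1 ≤ nx) (hnu : 1 ≤ nu) (hT : 1 ≤ T)
    (Ahat : Matrix (Fin nx) (Fin nx) ℝ) (Bhat : Matrix (Fin nx) (Fin nu) ℝ)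
    (Sig : Matrix (Fin (T+1) × Fin nx) (Fin (T+1) × Fin nx) ℝ)
    (K : Matrix (Fin (T+1) × Fin nu) (Fin (T+1) × Fin nx) ℝ)
    (hSigBLT : IsBLT Sig) (hSig : IsUnit Sig) (hKBLT : IsBLT K) :
    (dshift T nx * (blkDiag T Ahat + blkDiag T Bhat * K)) ^ (T+1) = 0 ∧
    IsUnit (1 - dshift T nx * (blkDiag T Ahat + blkDiag T Bhat * K)) ∧
    IsBLT ((1 - dshift T nx * (blkDiag T Ahat + blkDiag T Bhat * K))⁻¹ * Sig) ∧
    IsBLT (K * ((1 - dshift T nx * (blkDiag T Ahat + blkDiag T Bhat * K))⁻¹ * Sig)) ∧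
    (1 - dshift T nx * blkDiag T Ahat) *
        ((1 - dshift T nx * (blkDiag T Ahat + blkDiag T Bhat * K))⁻¹ * Sig) -
      dshift T nx * blkDiag T Bhat *
        (K * ((1 - dshift T nx * (blkDiag T Ahat + blkDiag T Bhat * K))⁻¹ * Sig)) = Sig :=
  statement0_general nx nu T Ahat Bhat Sig K hSigBLT hKBLT
end
end

section
/- Let Φx ∈ ℝ^{(T+1)n_x×(T+1)n_x} and Φu ∈ ℝ^{(T+1)n_u×(T+1)n_x} be block-lower-triangular, let Δ_A ∈ ℝ^{n_x×n_x}, Δ_B ∈ ℝ^{n_x×n_u}, and set 𝚫_A = blkdiag(Δ_A,…,Δ_A,0) ∈ ℝ^{(T+1)n_x×(T+1)n_x}, 𝚫_B = blkdiag(Δ_B,…,Δ_B,0) ∈ ℝ^{(T+1)n_x×(T+1)n_u}. Then M := Z(𝚫_AΦx + 𝚫_BΦu) satisfies M^{T+1} = 0, so I − M is invertible; moreover, if vectors η, w ∈ ℝ^{(T+1)n_x}, x ∈ ℝ^{(T+1)n_x}, u ∈ ℝ^{(T+1)n_u} satisfy x = Φxη, u = Φuη, and η = Z𝚫_A x + Z𝚫_B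 u + w, then η = (I − M)^{-1}w, x = Φx(I − M)^{-1}w, and u = Φu(I − M)^{-1}w. -/
open Matrix Finset

noncomputable section

lemma blkDiag_mul_BLT {T p q n : ℕ} (D : Matrix (Fin p) (Fin q) ℝ)
    (Φ : Matrix (Fin (T+1) × Fin q) (Fin (T+1) × Fin n) ℝ) (hΦ : IsBLT Φ) :
    IsBLT (blkDiag T D * Φ) := by
  intro i j a b hij
  rw [Matrix.mul_apply]
  apply Finset.sum_eq_zero
  rintro ⟨l, c⟩ -
  by_cases h : i = l ∧ (i : ℕ) < T
  · rw [hΦ l j c b (h.1 ▸ hij), mul_zero]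
  · simp only [blkDiag, Matrix.of_apply]
    rw [if_neg h, zero_mul]

lemma add_BLT {T p n : ℕ} (A B : Matrix (Fin (T+1) × Fin p) (Fin (T+1) × Fin n) ℝ)
    (hA : IsBLT A) (hB : IsBLT B) : IsBLT (A + B) := by
  intro i j a b hij
  simp [hA i j a b hij, hB i j a b hij]

lemma dshift_mul_strict {T n q : ℕ}
    (N : Matrix (Fin (T+1) × Fin n) (Fin (T+1) × Fin q) ℝ) (hN : IsBLT N) :
    ∀ i j, ((i.1 : ℕ) ≤ (j.1 : ℕ)) → (dshift T n * N) i j = 0 := by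
  rintro ⟨i, a⟩ ⟨j, b⟩ hij
  rw [Matrix.mul_apply]
  apply Finset.sum_eq_zero
  rintro ⟨l, c⟩ -
  by_cases h : (i : ℕ) = (l : ℕ) + 1 ∧ a = c
  · have hij' : (i : ℕ) ≤ (j : ℕ) := hij
    have hlj : l < j := by
      have : (l : ℕ) < (j : ℕ) := by omega
      exact this
    rw [hN l j c b hlj, mul_zero]
  · simp only [dshift, Matrix.of_apply]
    rw [if_neg h, zero_mul]

lemma strict_pow_zero {T n : ℕ} (M : Matrix (Fin (T+1) × Fin n) (Fin (T+1) × Fin n) ℝ)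
    (hM : ∀ i j, ((i.1 : ℕ) ≤ (j.1 : ℕ)) → M i j = 0) :
    ∀ (k : ℕ) (i j : Fin (T+1) × Fin n), ((i.1 : ℕ) < (j.1 : ℕ) + k) → (M ^ k) i j = 0 := by
  intro k
  induction k with
  | zero =>
    rintro ⟨i, a⟩ ⟨j, b⟩ h
    have h' : (i : ℕ) < (j : ℕ) + 0 := h
    rw [pow_zero]
    apply Matrix.one_apply_ne
    intro hc
    have : i = j := (Prod.mk.injEq _ _ _ _ ▸ hc).1
    omega
  | succ k ih =>
    rintro ⟨i, a⟩ ⟨j, b⟩ h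
    have h' : (i : ℕ) < (j : ℕ) + (k + 1) := h
    rw [pow_succ, Matrix.mul_apply]
    apply Finset.sum_eq_zero
    rintro ⟨l, c⟩ -
    by_cases hl : (i : ℕ) < (l : ℕ) + k
    · rw [ih (i, a) (l, c) hl, zero_mul]
    · have hlj : (l : ℕ) ≤ (j : ℕ) := by omega
      rw [hM (l, c) (j, b) hlj, mul_zero]

theorem statement4 (nx nu T : ℕ) (hnx : 1 ≤ nx) (hnu : 1 ≤ nu) (hT : 1 ≤ T)
    (Phix : Matrix (Fin (T+1) × Fin nx) (Fin (T+1) × Fin nx) ℝ)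
    (Phiu : Matrix (Fin (T+1) × Fin nu) (Fin (T+1) × Fin nx) ℝ)
    (hPhixBLT : IsBLT Phix) (hPhiuBLT : IsBLT Phiu)
    (DA : Matrix (Fin nx) (Fin nx) ℝ) (DB : Matrix (Fin nx) (Fin nu) ℝ) :
    (dshift T nx * (blkDiag T DA * Phix + blkDiag T DB * Phiu)) ^ (T+1) = 0 ∧
    IsUnit (1 - dshift T nx * (blkDiag T DA * Phix + blkDiag T DB * Phiu)) ∧
    ∀ (η w x : Fin (T+1) × Fin nx → ℝ) (u : Fin (T+1) × Fin nu → ℝ),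
      x = Phix.mulVec η → u = Phiu.mulVec η →
      η = (dshift T nx * blkDiag T DA).mulVec x + (dshift T nx * blkDiag T DB).mulVec u + w →
      η = (1 - dshift T nx * (blkDiag T DA * Phix + blkDiag T DB * Phiu))⁻¹.mulVec w ∧
      x = (Phix * (1 - dshift T nx * (blkDiag T DA * Phix + blkDiag T DB * Phiu))⁻¹).mulVec w ∧
      u = (Phiu * (1 - dshift T nx * (blkDiag T DA * Phix + blkDiag T DB * Phiu))⁻¹).mulVec w := by
  set N := blkDiag T DA * Phix + blkDiag T DB * Phiu with hN
  have hNBLT : IsBLT N :=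
    add_BLT _ _ (blkDiag_mul_BLT DA Phix hPhixBLT) (blkDiag_mul_BLT DB Phiu hPhiuBLT)
  set M := dshift T nx * N with hMdef
  have hMstrict : ∀ i j, ((i.1 : ℕ) ≤ (j.1 : ℕ)) → M i j = 0 :=
    dshift_mul_strict N hNBLT
  have hpow : M ^ (T+1) = 0 := by
    ext i j
    have hi : (i.1 : ℕ) < T + 1 := i.1.isLt
    rw [strict_pow_zero M hMstrict (T+1) i j (by omega)]
    simp
  have hnil : IsNilpotent M := ⟨T+1, hpow⟩
  have hunit : IsUnit (1 - M) := by
    have := IsNilpotent.isUnit_one_sub hnil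
    exact this
  refine ⟨hpow, hunit, ?_⟩
  intro η w x u hx hu hη
  have hdet : IsUnit (1 - M).det := (Matrix.isUnit_iff_isUnit_det _).mp hunit
  have hηM : η = M.mulVec η + w := by
    nth_rewrite 1 [hη]
    rw [hx, hu, Matrix.mulVec_mulVec, Matrix.mulVec_mulVec,
      show M = dshift T nx * blkDiag T DA * Phix + dshift T nx * blkDiag T DB * Phiu from by
        rw [hMdef, hN, mul_add, ← Matrix.mul_assoc, ← Matrix.mul_assoc],
      Matrix.add_mulVec]
  have hw : (1 - M).mulVec η = w := by
    rw [Matrix.sub_mulVec, Matrix.one_mulVec, sub_eq_iff_eq_add]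
    exact hηM.trans (add_comm _ _)
  have hηeq : η = (1 - M)⁻¹.mulVec w := by
    rw [← hw, Matrix.mulVec_mulVec, Matrix.nonsing_inv_mul _ hdet, Matrix.one_mulVec]
  refine ⟨hηeq, ?_, ?_⟩
  · rw [hx, hηeq, Matrix.mulVec_mulVec]
  · rw [hu, hηeq, Matrix.mulVec_mulVec]
end
end

section
/- Suppose ‖Δ_A‖_{∞→∞} ≤ ε_A, ‖Δ_B‖_{∞→∞} ≤ ε_B, and ‖w_t‖_∞ ≤ σ_w for 0 ≤ t ≤ T−1, and suppose the reals σ_0,…,σ_{T−1} > 0 satisfy: ε_A‖Φ̃x^{0,0}x_0‖_∞ + ε_B‖Φ̃u^{0,0}x_0‖_∞ + σ_w ≤ σ_0, and for each 1 ≤ t ≤ T−1, ε_A(‖Φ̃x^{t,t}x_0‖_∞ + Σ_{i=1}^{t} ‖Φ̃x^{t,t−i}‖_{∞→∞}) + ε_B(‖Φ̃u^{t,t}x_0‖_∞ + Σ_{i=1}^{t} ‖Φ̃u^{t,t−i}‖_{∞→∞}) + σ_w ≤ σ_t. Define recursively, for 0 ≤ t ≤ T−1: x_t = Φ̃x^{t,t}x_0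 + Σ_{i=1}^{t} Φ̃x^{t,t−i} w̃_{i−1}, u_t = Φ̃u^{t,t}x_0 + Σ_{i=1}^{t} Φ̃u^{t,t−i} w̃_{i−1}, η_t = Δ_A x_t + Δ_B u_t + w_t, and w̃_t = σ_t^{−1} η_t. Then ‖η_t‖_∞ ≤ σ_t for all 0 ≤ t ≤ T−1. -/
/-!
Strong induction on `t`. If `‖η s‖ ≤ σ s` for all `s < t`, the normalized disturbances `w̃ s`
lie in the unit ball of `‖·‖_∞`, so every term `Φ̃^{t,t-i} w̃_{i-1}` is bounded by the operator
norm of its matrix. The triangle inequality then bounds `‖η t‖` by exactly the left-hand side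
of the hypothesis on `σ t`.
-/

open Matrix Finset

noncomputable section

/-- The ℓ¹ norm of a vector in `ℝⁿ`: `‖v‖₁ = ∑ i, |v i|`.
(The ℓ∞ norm is the default norm `‖·‖` on `Fin n → ℝ`.) -/
def norm1 {n : ℕ} (v : Fin n → ℝ) : ℝ := ∑ i, |v i|

/-- The operator norm `‖M‖_{∞→∞}` induced by the sup norm, i.e. the maximum
absolute row sum. -/
def opInf {n m : ℕ} (M : Matrix (Fin n) (Fin m) ℝ) : ℝ := ⨆ i, ∑ j, |M i j|

lemma sum_abs_row_le_opInf {n m : ℕ} (M : Matrix (Fin n) (Fin m) ℝ) (i : Fin n) :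
    ∑ j, |M i j| ≤ opInf M :=
  le_ciSup (f := fun i => ∑ j, |M i j|) (Set.finite_range _).bddAbove i

lemma opInf_nonneg {n m : ℕ} (M : Matrix (Fin n) (Fin m) ℝ) : 0 ≤ opInf M :=
  Real.iSup_nonneg fun i => sum_nonneg fun j _ => abs_nonneg (M i j)

lemma norm_mulVec_le_opInf_mul_norm {n m : ℕ} (M : Matrix (Fin n) (Fin m) ℝ)
    (v : Fin m → ℝ) : ‖M *ᵥ v‖ ≤ opInf M * ‖v‖ := by
  refine (pi_norm_le_iff_of_nonneg (mul_nonneg (opInf_nonneg M) (norm_nonneg v))).2 fun i => ?_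
  calc ‖(M *ᵥ v) i‖ = |∑ j, M i j * v j| := rfl
    _ ≤ ∑ j, |M i j * v j| := abs_sum_le_sum_abs _ _
    _ = ∑ j, |M i j| * |v j| := by simp only [abs_mul]
    _ ≤ ∑ j, |M i j| * ‖v‖ := by
        gcongr with j
        exact norm_le_pi_norm v j
    _ = (∑ j, |M i j|) * ‖v‖ := by rw [sum_mul]
    _ ≤ opInf M * ‖v‖ := by gcongr; exact sum_abs_row_le_opInf M i

lemma norm_mulVec_add_sum_mulVec_le {n m : ℕ} (Φ : ℕ → Matrix (Fin n) (Fin m) ℝ)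
    (x0 : Fin m → ℝ) (v : ℕ → Fin m → ℝ) (t : ℕ) (hv : ∀ s < t, ‖v s‖ ≤ 1) :
    ‖Φ t *ᵥ x0 + ∑ i ∈ Icc 1 t, Φ (t - i) *ᵥ v (i - 1)‖ ≤
      ‖Φ t *ᵥ x0‖ + ∑ i ∈ Icc 1 t, opInf (Φ (t - i)) := by
  refine (norm_add_le _ _).trans (add_le_add_right ?_ _)
  refine (norm_sum_le _ _).trans (sum_le_sum fun i hi => ?_)
  have hi : i - 1 < t := by grind
  calc ‖Φ (t - i) *ᵥ v (i - 1)‖ ≤ opInf (Φ (t - i)) * ‖v (i - 1)‖ :=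
        norm_mulVec_le_opInf_mul_norm _ _
    _ ≤ opInf (Φ (t - i)) * 1 := by gcongr; exacts [opInf_nonneg _, hv _ hi]
    _ = opInf (Φ (t - i)) := mul_one _

lemma norm_mulVec_add_mulVec_add_le {n m : ℕ} {εA εB σw : ℝ} {ΔA : Matrix (Fin n) (Fin n) ℝ}
    {ΔB : Matrix (Fin n) (Fin m) ℝ} (hΔA : opInf ΔA ≤ εA) (hΔB : opInf ΔB ≤ εB)
    (x : Fin n → ℝ) (u : Fin m → ℝ) {w : Fin n → ℝ} (hw : ‖w‖ ≤ σw) :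
    ‖ΔA *ᵥ x + ΔB *ᵥ u + w‖ ≤ εA * ‖x‖ + εB * ‖u‖ + σw :=
  calc ‖ΔA *ᵥ x + ΔB *ᵥ u + w‖ ≤ ‖ΔA *ᵥ x‖ + ‖ΔB *ᵥ u‖ + ‖w‖ := norm_add₃_le
    _ ≤ opInf ΔA * ‖x‖ + opInf ΔB * ‖u‖ + σw := by
        gcongr <;> exact norm_mulVec_le_opInf_mul_norm _ _
    _ ≤ εA * ‖x‖ + εB * ‖u‖ + σw := by gcongr

lemma norm_inv_smul_le_one {E : Type*} [SeminormedAddCommGroup E] [NormedSpace ℝ E] {σ : ℝ}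
    (hσ : 0 < σ) {v : E} (hv : ‖v‖ ≤ σ) :
    ‖σ⁻¹ • v‖ ≤ 1 := by
  rw [norm_smul, norm_inv, Real.norm_of_nonneg hσ.le, inv_mul_le_one₀ hσ]
  exact hv

theorem statement5_general (nx nu T : ℕ)
    (εA εB σw : ℝ) (hεA : 0 ≤ εA) (hεB : 0 ≤ εB)
    (x0 : Fin nx → ℝ)
    (ΔA : Matrix (Fin nx) (Fin nx) ℝ) (ΔB : Matrix (Fin nx) (Fin nu) ℝ)
    (w : ℕ → Fin nx → ℝ)
    (Phix : ℕ → ℕ → Matrix (Fin nx) (Fin nx) ℝ)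
    (Phiu : ℕ → ℕ → Matrix (Fin nu) (Fin nx) ℝ)
    (σ : ℕ → ℝ) (hσ : ∀ t < T, 0 < σ t)
    (hΔA : opInf ΔA ≤ εA) (hΔB : opInf ΔB ≤ εB)
    (hw : ∀ t < T, ‖w t‖ ≤ σw)
    (hσ0 : εA * ‖(Phix 0 0).mulVec x0‖ + εB * ‖(Phiu 0 0).mulVec x0‖ + σw ≤ σ 0)
    (hσt : ∀ t, 1 ≤ t → t < T →
      εA * (‖(Phix t t).mulVec x0‖ + ∑ i ∈ Icc 1 t, opInf (Phix t (t - i))) +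
        εB * (‖(Phiu t t).mulVec x0‖ + ∑ i ∈ Icc 1 t, opInf (Phiu t (t - i))) + σw ≤ σ t)
    (x : ℕ → Fin nx → ℝ) (u : ℕ → Fin nu → ℝ) (η : ℕ → Fin nx → ℝ) (wt : ℕ → Fin nx → ℝ)
    (hx : ∀ t < T, x t =
      (Phix t t).mulVec x0 + ∑ i ∈ Icc 1 t, (Phix t (t - i)).mulVec (wt (i - 1)))
    (hu : ∀ t < T, u t =
      (Phiu t t).mulVec x0 + ∑ i ∈ Icc 1 t, (Phiu t (t - i)).mulVec (wt (i - 1)))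
    (hη : ∀ t < T, η t = ΔA.mulVec (x t) + ΔB.mulVec (u t) + w t)
    (hwt : ∀ t < T, wt t = (σ t)⁻¹ • η t) :
    ∀ t < T, ‖η t‖ ≤ σ t := by
  have hσ_bound : ∀ t < T,
      εA * (‖(Phix t t).mulVec x0‖ + ∑ i ∈ Icc 1 t, opInf (Phix t (t - i))) +
        εB * (‖(Phiu t t).mulVec x0‖ + ∑ i ∈ Icc 1 t, opInf (Phiu t (t - i))) + σw ≤ σ t := by
    rintro (_ | t) ht
    · simpa using hσ0
    · exact hσt _ t.succ_pos ht
  intro t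
  induction t using Nat.strong_induction_on with
  | _ t ih =>
  intro ht
  have hwt_le : ∀ s < t, ‖wt s‖ ≤ 1 := fun s hs => by
    rw [hwt s (hs.trans ht)]
    exact norm_inv_smul_le_one (hσ s (hs.trans ht)) (ih s hs (hs.trans ht))
  calc ‖η t‖ ≤ εA * ‖x t‖ + εB * ‖u t‖ + σw := by
        rw [hη t ht]; exact norm_mulVec_add_mulVec_add_le hΔA hΔB _ _ (hw t ht)
    _ ≤ _ := by
        rw [hx t ht, hu t ht]
        gcongr <;> exact norm_mulVec_add_sum_mulVec_le _ x0 wt t hwt_le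
    _ ≤ σ t := hσ_bound t ht

theorem statement5 (nx nu T : ℕ) (hnx : 1 ≤ nx) (hnu : 1 ≤ nu) (hT : 1 ≤ T)
    (εA εB σw : ℝ) (hεA : 0 ≤ εA) (hεB : 0 ≤ εB) (hσw : 0 ≤ σw)
    (x0 : Fin nx → ℝ)
    (ΔA : Matrix (Fin nx) (Fin nx) ℝ) (ΔB : Matrix (Fin nx) (Fin nu) ℝ)
    (w : ℕ → Fin nx → ℝ)
    (Phix : ℕ → ℕ → Matrix (Fin nx) (Fin nx) ℝ)
    (Phiu : ℕ → ℕ → Matrix (Fin nu) (Fin nx) ℝ)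
    (σ : ℕ → ℝ) (hσ : ∀ t < T, 0 < σ t)
    (hΔA : opInf ΔA ≤ εA) (hΔB : opInf ΔB ≤ εB)
    (hw : ∀ t < T, ‖w t‖ ≤ σw)
    (hσ0 : εA * ‖(Phix 0 0).mulVec x0‖ + εB * ‖(Phiu 0 0).mulVec x0‖ + σw ≤ σ 0)
    (hσt : ∀ t, 1 ≤ t → t < T →
      εA * (‖(Phix t t).mulVec x0‖ + ∑ i ∈ Icc 1 t, opInf (Phix t (t - i))) +
        εB * (‖(Phiu t t).mulVec x0‖ + ∑ i ∈ Icc 1 t, opInf (Phiu t (t - i))) + σw ≤ σ t)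
    (x : ℕ → Fin nx → ℝ) (u : ℕ → Fin nu → ℝ) (η : ℕ → Fin nx → ℝ) (wt : ℕ → Fin nx → ℝ)
    (hx : ∀ t < T, x t =
      (Phix t t).mulVec x0 + ∑ i ∈ Icc 1 t, (Phix t (t - i)).mulVec (wt (i - 1)))
    (hu : ∀ t < T, u t =
      (Phiu t t).mulVec x0 + ∑ i ∈ Icc 1 t, (Phiu t (t - i)).mulVec (wt (i - 1)))
    (hη : ∀ t < T, η t = ΔA.mulVec (x t) + ΔB.mulVec (u t) + w t)
    (hwt : ∀ t < T, wt t = (σ t)⁻¹ • η t) :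
    ∀ t < T, ‖η t‖ ≤ σ t :=
  statement5_general nx nu T εA εB σw hεA hεB x0 ΔA ΔB w Phix Phiu σ hσ hΔA hΔB hw hσ0 hσt x u η wt
    hx hu hη hwt
end
end

section
/- For every f ∈ ℝ^n, x ∈ ℝ^m, and ε ≥ 0, the number ε‖f‖_1‖x‖_∞ is the greatest element of the set {fᵀ(Δx) : Δ ∈ ℝ^{n×m}, ‖Δ‖_{∞→∞} ≤ ε}; that is, fᵀ(Δx) ≤ ε‖f‖_1‖x‖_∞ whenever ‖Δ‖_{∞→∞} ≤ ε, and there exists Δ with ‖Δ‖_{∞→∞} ≤ ε achieving fᵀ(Δx) = ε‖f‖_1‖x‖_∞. -/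
open Matrix Finset

noncomputable section

lemma mul_sign_eq_abs (r : ℝ) : r * Real.sign r = |r| := by
  rcases lt_trichotomy r 0 with h | h | h
  · rw [Real.sign_of_neg h, abs_of_neg h]; ring
  · simp [h]
  · rw [Real.sign_of_pos h, abs_of_pos h]; ring

lemma abs_sign_le (r : ℝ) : |Real.sign r| ≤ 1 := by
  rcases lt_trichotomy r 0 with h | h | h
  · rw [Real.sign_of_neg h]; norm_num
  · simp [h]
  · rw [Real.sign_of_pos h]; norm_num

theorem statement9 (n m : ℕ) (f : Fin n → ℝ) (x : Fin m → ℝ) (ε : ℝ) (hε : 0 ≤ ε) :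
    IsGreatest
      {z : ℝ | ∃ Δ : Matrix (Fin n) (Fin m) ℝ, opInf Δ ≤ ε ∧ f ⬝ᵥ Δ.mulVec x = z}
      (ε * norm1 f * ‖x‖) := by
  constructor
  · -- membership
    rcases Nat.eq_zero_or_pos m with hm | hm
    · subst hm
      refine ⟨0, ?_, ?_⟩
      · unfold opInf
        have : ∀ i : Fin n, ∑ j : Fin 0, |(0 : Matrix (Fin n) (Fin 0) ℝ) i j| = 0 := by
          simp
        simp only [this]
        exact le_trans (le_of_eq (by simp [Real.iSup_const_zero])) hε
      · have hx : ‖x‖ = 0 := by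
          simp [Subsingleton.elim x 0]
        simp [Matrix.mulVec, dotProduct, hx]
    · -- m > 0: pick maximizing index
      have : Nonempty (Fin m) := ⟨⟨0, hm⟩⟩
      obtain ⟨j₀, hj₀⟩ := Finite.exists_max (fun j => |x j|)
      have hxn : ‖x‖ = |x j₀| := by
        apply le_antisymm
        · apply pi_norm_le_iff_of_nonneg (abs_nonneg _) |>.2
          intro k; rw [Real.norm_eq_abs]; exact hj₀ k
        · rw [← Real.norm_eq_abs]; exact norm_le_pi_norm x j₀
      set Δ : Matrix (Fin n) (Fin m) ℝ :=
        fun i j => if j = j₀ then ε * Real.sign (f i) * Real.sign (x j₀) else 0 with hΔ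
      refine ⟨Δ, ?_, ?_⟩
      · unfold opInf
        apply Real.iSup_le _ hε
        intro i
        have : ∑ j, |Δ i j| = |ε * Real.sign (f i) * Real.sign (x j₀)| := by
          simp only [hΔ, apply_ite abs, abs_zero, Finset.sum_ite_eq', Finset.mem_univ, if_true]
        rw [this, abs_mul, abs_mul, abs_of_nonneg hε]
        calc ε * |Real.sign (f i)| * |Real.sign (x j₀)|
            ≤ ε * 1 * 1 := by
              apply mul_le_mul (mul_le_mul le_rfl (abs_sign_le _) (abs_nonneg _) hε)
                (abs_sign_le _) (abs_nonneg _) (by positivity)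
          _ = ε := by ring
      · have hrow : ∀ i, Δ.mulVec x i = ε * Real.sign (f i) * |x j₀| := by
          intro i
          simp only [Matrix.mulVec, dotProduct, hΔ]
          rw [Finset.sum_eq_single j₀]
          · rw [if_pos rfl, mul_assoc, mul_assoc, mul_comm (Real.sign (x j₀)) (x j₀),
              mul_sign_eq_abs, mul_assoc]
          · intro b _ hb; rw [if_neg hb, zero_mul]
          · intro h; exact absurd (Finset.mem_univ j₀) h
        have : f ⬝ᵥ Δ.mulVec x = ∑ i, |f i| * (ε * |x j₀|) := by
          simp only [dotProduct, hrow]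
          apply Finset.sum_congr rfl
          intro i _
          rw [show f i * (ε * Real.sign (f i) * |x j₀|)
              = (f i * Real.sign (f i)) * (ε * |x j₀|) by ring, mul_sign_eq_abs]
        rw [this, ← Finset.sum_mul, hxn]
        unfold norm1; ring
  · -- upper bound
    rintro z ⟨Δ, hΔ, rfl⟩
    have hrowsum : ∀ i : Fin n, ∑ j, |Δ i j| ≤ ε := by
      intro i
      have hΔ' : (⨆ i, ∑ j, |Δ i j|) ≤ ε := hΔ
      exact le_trans (le_ciSup (Set.Finite.bddAbove
        (Set.finite_range (fun i => ∑ j, |Δ i j|))) i) hΔ'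
    have hx : ∀ j, |x j| ≤ ‖x‖ := by
      intro j; rw [← Real.norm_eq_abs]; exact norm_le_pi_norm x j
    have hxnn : (0:ℝ) ≤ ‖x‖ := norm_nonneg _
    calc f ⬝ᵥ Δ.mulVec x
        ≤ ∑ i, |f i| * (ε * ‖x‖) := by
          apply Finset.sum_le_sum
          intro i _
          calc f i * Δ.mulVec x i ≤ |f i * Δ.mulVec x i| := le_abs_self _
            _ = |f i| * |Δ.mulVec x i| := abs_mul _ _
            _ ≤ |f i| * (ε * ‖x‖) := by
                apply mul_le_mul_of_nonneg_left _ (abs_nonneg _)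
                have hmv : Δ.mulVec x i = ∑ j, Δ i j * x j := rfl
                rw [hmv]
                calc |∑ j, Δ i j * x j| ≤ ∑ j, |Δ i j * x j| :=
                      Finset.abs_sum_le_sum_abs _ _
                  _ ≤ ∑ j, |Δ i j| * ‖x‖ := by
                      apply Finset.sum_le_sum
                      intro j _
                      rw [abs_mul]
                      exact mul_le_mul_of_nonneg_left (hx j) (abs_nonneg _)
                  _ = (∑ j, |Δ i j|) * ‖x‖ := (Finset.sum_mul _ _ _).symm
                  _ ≤ ε * ‖x‖ := mul_le_mul_of_nonneg_right (hrowsum i) hxnn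
      _ = ε * norm1 f * ‖x‖ := by unfold norm1; rw [← Finset.sum_mul]; ring
end
end

section
/- (Non-conservativeness of the horizon-one inner approximation.) Fix x_0 ∈ ℝ^{n_x}. The following two statements are equivalent: (i) there exists K ∈ ℝ^{n_u×n_x} such that F_x x_0 ≤ b_x, F_u(Kx_0) ≤ b_u, and for every admissible (Δ_A, Δ_B, w): F_T((Â + Δ_A)x_0 + (B̂ + Δ_B)Kx_0 + w) ≤ b_T; (ii) there exist K ∈ ℝ^{n_u×n_x} and σ_0 > 0 such that ε_A‖x_0‖_∞ + ε_B‖Kx_0‖_∞ + σ_w ≤ σ_0, F_x x_0 ≤ b_x, F_u(Kx_0) ≤ b_u, and for every row f of F_T with corresponding entry b of b_T: fᵀ(Â + B̂K)x_0 + ‖f‖_1 σ_0 ≤ b. -/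
open Matrix Finset

noncomputable section

/-! The constraint in (i) splits into one scalar inequality
`f ⬝ᵥ ((Â + B̂K)x₀ + n) ≤ b` per row `f` of `F_T`, where the noise `n = Δ_A x₀ + Δ_B Kx₀ + w`
ranges over the admissible triples. Hölder's inequality and `‖Δv‖_∞ ≤ ‖Δ‖_{∞→∞} ‖v‖_∞` bound
`f ⬝ᵥ n` by `‖f‖₁ σ` with `σ = ε_A ‖x₀‖_∞ + ε_B ‖Kx₀‖_∞ + σ_w`, and the bound is attained by
`w = σ_w sign f` and the rank-one perturbations `Δ = ε sign f ⊗ e`, where `e` is a signed unit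
vector picking out a largest entry of the vector `Δ` acts on. So (i) is (ii) with `σ₀ = σ`, and a
larger `σ₀` only strengthens (ii). -/

section
variable {l m n : ℕ}

lemma abs_sign_le_one (x : ℝ) : |(SignType.sign x : ℝ)| ≤ 1 := by
  rcases SignType.sign x with _ | _ | _ <;> simp

lemma norm1_nonneg (v : Fin n → ℝ) : 0 ≤ norm1 v :=
  sum_nonneg fun _ _ => abs_nonneg _

lemma norm1_smul (c : ℝ) (v : Fin n → ℝ) : norm1 (c • v) = |c| * norm1 v := by
  simp only [norm1, Pi.smul_apply, smul_eq_mul, abs_mul, mul_sum]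

lemma norm1_single (j : Fin n) (a : ℝ) : norm1 (Pi.single j a) = |a| := by
  rw [norm1, sum_eq_single j (fun k _ hk => by simp [hk]) (by simp)]
  simp

lemma abs_dotProduct_le_norm1_mul_norm (f v : Fin n → ℝ) : |f ⬝ᵥ v| ≤ norm1 f * ‖v‖ := by
  rw [dotProduct, norm1, sum_mul]
  refine (abs_sum_le_sum_abs _ _).trans (sum_le_sum fun k _ => ?_)
  rw [abs_mul]
  exact mul_le_mul_of_nonneg_left (norm_le_pi_norm v k) (abs_nonneg _)

lemma dotProduct_sign_eq_norm1 (f : Fin n → ℝ) :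
    f ⬝ᵥ (fun k => (SignType.sign (f k) : ℝ)) = norm1 f :=
  sum_congr rfl fun k _ => self_mul_sign (f k)

lemma norm1_row_le_opInf (M : Matrix (Fin m) (Fin n) ℝ) (i : Fin m) : norm1 (M i) ≤ opInf M :=
  le_ciSup (f := fun i => ∑ j, |M i j|) (Set.finite_range _).bddAbove i

lemma norm_mulVec_le_opInf_mul (M : Matrix (Fin m) (Fin n) ℝ) (x : Fin n → ℝ) :
    ‖M *ᵥ x‖ ≤ opInf M * ‖x‖ := by
  have hM : 0 ≤ opInf M := Real.iSup_nonneg fun _ => norm1_nonneg _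
  refine (pi_norm_le_iff_of_nonneg (by positivity)).2 fun i => ?_
  calc |M i ⬝ᵥ x| ≤ norm1 (M i) * ‖x‖ := abs_dotProduct_le_norm1_mul_norm _ _
    _ ≤ opInf M * ‖x‖ := by gcongr; exact norm1_row_le_opInf M i

lemma exists_norm1_le_one_dotProduct_eq_norm (x : Fin n → ℝ) :
    ∃ e : Fin n → ℝ, norm1 e ≤ 1 ∧ e ⬝ᵥ x = ‖x‖ := by
  rcases isEmpty_or_nonempty (Fin n) with _ | _
  · exact ⟨0, by simp [norm1], by simp [Subsingleton.elim x 0]⟩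
  obtain ⟨j, -, hj⟩ := exists_max_image univ (fun k => |x k|) univ_nonempty
  have hxj : ‖x‖ = |x j| :=
    le_antisymm ((pi_norm_le_iff_of_nonneg (abs_nonneg _)).2 fun k => hj k (mem_univ k))
      (norm_le_pi_norm x j)
  refine ⟨Pi.single j (SignType.sign (x j) : ℝ), ?_, ?_⟩
  · rw [norm1_single]
    exact abs_sign_le_one (x j)
  · rw [single_dotProduct, sign_mul_self, hxj]

lemma exists_opInf_le_mulVec_eq_smul {ε : ℝ} (hε : 0 ≤ ε) (x : Fin n → ℝ) (s : Fin m → ℝ)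
    (hs : ∀ k, |s k| ≤ 1) :
    ∃ M : Matrix (Fin m) (Fin n) ℝ, opInf M ≤ ε ∧ M *ᵥ x = (ε * ‖x‖) • s := by
  obtain ⟨e, he, hex⟩ := exists_norm1_le_one_dotProduct_eq_norm x
  refine ⟨ε • vecMulVec s e, Real.iSup_le (fun i => ?_) hε, ?_⟩
  · have hrow : (ε • vecMulVec s e) i = (ε * s i) • e := by
      ext j; simp [vecMulVec, mul_assoc]
    change norm1 _ ≤ ε
    rw [hrow, norm1_smul, abs_mul, abs_of_nonneg hε]
    simpa using mul_le_mul (mul_le_of_le_one_right hε (hs i)) he (norm1_nonneg e) hε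
  · rw [smul_mulVec, vecMulVec_mulVec, hex, op_smul_eq_smul, smul_smul]

variable {εA εB σw : ℝ}

lemma dotProduct_le_of_admissible (f : Fin m → ℝ) (x : Fin n → ℝ) (y : Fin l → ℝ)
    {ΔA : Matrix (Fin m) (Fin n) ℝ} {ΔB : Matrix (Fin m) (Fin l) ℝ} {w : Fin m → ℝ}
    (hA : opInf ΔA ≤ εA) (hB : opInf ΔB ≤ εB) (hw : ‖w‖ ≤ σw) :
    f ⬝ᵥ (ΔA *ᵥ x + ΔB *ᵥ y + w) ≤ norm1 f * (εA * ‖x‖ + εB * ‖y‖ + σw) := by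
  have hnoise : ‖ΔA *ᵥ x + ΔB *ᵥ y + w‖ ≤ εA * ‖x‖ + εB * ‖y‖ + σw := by
    calc _ ≤ ‖ΔA *ᵥ x‖ + ‖ΔB *ᵥ y‖ + ‖w‖ := norm_add₃_le
      _ ≤ opInf ΔA * ‖x‖ + opInf ΔB * ‖y‖ + ‖w‖ := by
          gcongr <;> exact norm_mulVec_le_opInf_mul _ _
      _ ≤ εA * ‖x‖ + εB * ‖y‖ + σw := by gcongr
  calc _ ≤ |f ⬝ᵥ (ΔA *ᵥ x + ΔB *ᵥ y + w)| := le_abs_self _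
    _ ≤ norm1 f * ‖ΔA *ᵥ x + ΔB *ᵥ y + w‖ := abs_dotProduct_le_norm1_mul_norm _ _
    _ ≤ _ := by gcongr; exact norm1_nonneg f

lemma exists_admissible_dotProduct_eq (hεA : 0 ≤ εA) (hεB : 0 ≤ εB) (hσw : 0 ≤ σw)
    (f : Fin m → ℝ) (x : Fin n → ℝ) (y : Fin l → ℝ) :
    ∃ (ΔA : Matrix (Fin m) (Fin n) ℝ) (ΔB : Matrix (Fin m) (Fin l) ℝ) (w : Fin m → ℝ),
      opInf ΔA ≤ εA ∧ opInf ΔB ≤ εB ∧ ‖w‖ ≤ σw ∧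
      f ⬝ᵥ (ΔA *ᵥ x + ΔB *ᵥ y + w) = norm1 f * (εA * ‖x‖ + εB * ‖y‖ + σw) := by
  set s : Fin m → ℝ := fun k => (SignType.sign (f k) : ℝ)
  have hs : ∀ k, |s k| ≤ 1 := fun k => abs_sign_le_one (f k)
  obtain ⟨ΔA, hA, hAx⟩ := exists_opInf_le_mulVec_eq_smul hεA x s hs
  obtain ⟨ΔB, hB, hBy⟩ := exists_opInf_le_mulVec_eq_smul hεB y s hs
  refine ⟨ΔA, ΔB, σw • s, hA, hB, ?_, ?_⟩
  · refine (pi_norm_le_iff_of_nonneg hσw).2 fun k => ?_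
    simpa [abs_of_nonneg hσw] using mul_le_mul_of_nonneg_left (hs k) hσw
  · rw [hAx, hBy, ← add_smul, ← add_smul, dotProduct_smul, dotProduct_sign_eq_norm1, smul_eq_mul,
      mul_comm]

lemma forall_admissible_mulVec_le_iff (hεA : 0 ≤ εA) (hεB : 0 ≤ εB) (hσw : 0 ≤ σw)
    {p : ℕ} (F : Matrix (Fin p) (Fin m) ℝ) (b : Fin p → ℝ) (v : Fin m → ℝ) (x : Fin n → ℝ)
    (y : Fin l → ℝ) :
    (∀ (ΔA : Matrix (Fin m) (Fin n) ℝ) (ΔB : Matrix (Fin m) (Fin l) ℝ) (w : Fin m → ℝ),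
        opInf ΔA ≤ εA → opInf ΔB ≤ εB → ‖w‖ ≤ σw → F *ᵥ (v + (ΔA *ᵥ x + ΔB *ᵥ y + w)) ≤ b) ↔
      ∀ i, F i ⬝ᵥ v + norm1 (F i) * (εA * ‖x‖ + εB * ‖y‖ + σw) ≤ b i := by
  constructor
  · intro h i
    obtain ⟨ΔA, ΔB, w, hA, hB, hw, hworst⟩ := exists_admissible_dotProduct_eq hεA hεB hσw (F i) x y
    have hi : F i ⬝ᵥ (v + (ΔA *ᵥ x + ΔB *ᵥ y + w)) ≤ b i := h ΔA ΔB w hA hB hw i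
    rwa [dotProduct_add, hworst] at hi
  · intro h ΔA ΔB w hA hB hw i
    change F i ⬝ᵥ _ ≤ b i
    rw [dotProduct_add]
    linarith [h i, dotProduct_le_of_admissible (F i) x y hA hB hw]

end

theorem statement12_general (nx nu px pu pT : ℕ)
    (Ahat : Matrix (Fin nx) (Fin nx) ℝ) (Bhat : Matrix (Fin nx) (Fin nu) ℝ)
    (εA εB σw : ℝ) (hεA : 0 ≤ εA) (hεB : 0 ≤ εB) (hσw : 0 < σw)
    (Fx : Matrix (Fin px) (Fin nx) ℝ) (bx : Fin px → ℝ)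
    (Fu : Matrix (Fin pu) (Fin nu) ℝ) (bu : Fin pu → ℝ)
    (FT : Matrix (Fin pT) (Fin nx) ℝ) (bT : Fin pT → ℝ)
    (x0 : Fin nx → ℝ) :
    (∃ K : Matrix (Fin nu) (Fin nx) ℝ,
        Fx.mulVec x0 ≤ bx ∧ Fu.mulVec (K.mulVec x0) ≤ bu ∧
        ∀ (ΔA : Matrix (Fin nx) (Fin nx) ℝ) (ΔB : Matrix (Fin nx) (Fin nu) ℝ)
          (w : Fin nx → ℝ), opInf ΔA ≤ εA → opInf ΔB ≤ εB → ‖w‖ ≤ σw →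
          FT.mulVec ((Ahat + ΔA).mulVec x0 + (Bhat + ΔB).mulVec (K.mulVec x0) + w) ≤ bT) ↔
      (∃ (K : Matrix (Fin nu) (Fin nx) ℝ) (σ0 : ℝ), 0 < σ0 ∧
        εA * ‖x0‖ + εB * ‖K.mulVec x0‖ + σw ≤ σ0 ∧
        Fx.mulVec x0 ≤ bx ∧ Fu.mulVec (K.mulVec x0) ≤ bu ∧
        ∀ i : Fin pT, FT i ⬝ᵥ (Ahat + Bhat * K).mulVec x0 + norm1 (FT i) * σ0 ≤ bT i) := by
  have hsplit : ∀ (K : Matrix (Fin nu) (Fin nx) ℝ) ΔA ΔB (w : Fin nx → ℝ),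
      (Ahat + ΔA) *ᵥ x0 + (Bhat + ΔB) *ᵥ (K *ᵥ x0) + w =
        (Ahat + Bhat * K) *ᵥ x0 + (ΔA *ᵥ x0 + ΔB *ᵥ (K *ᵥ x0) + w) := by
    intro K ΔA ΔB w
    simp only [add_mulVec, Matrix.add_mul, mulVec_mulVec]
    abel
  simp_rw [hsplit, forall_admissible_mulVec_le_iff hεA hεB hσw.le]
  constructor
  · rintro ⟨K, hx, hu, hT⟩
    exact ⟨K, _, by positivity, le_rfl, hx, hu, hT⟩
  · rintro ⟨K, σ0, -, hσ0, hx, hu, hT⟩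
    refine ⟨K, hx, hu, fun i => le_trans ?_ (hT i)⟩
    gcongr
    exact norm1_nonneg _

theorem statement12 (nx nu px pu pT : ℕ) (hnx : 1 ≤ nx) (hnu : 1 ≤ nu)
    (Ahat : Matrix (Fin nx) (Fin nx) ℝ) (Bhat : Matrix (Fin nx) (Fin nu) ℝ)
    (εA εB σw : ℝ) (hεA : 0 ≤ εA) (hεB : 0 ≤ εB) (hσw : 0 < σw)
    (Fx : Matrix (Fin px) (Fin nx) ℝ) (bx : Fin px → ℝ)
    (Fu : Matrix (Fin pu) (Fin nu) ℝ) (bu : Fin pu → ℝ)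
    (FT : Matrix (Fin pT) (Fin nx) ℝ) (bT : Fin pT → ℝ)
    (x0 : Fin nx → ℝ) :
    (∃ K : Matrix (Fin nu) (Fin nx) ℝ,
        Fx.mulVec x0 ≤ bx ∧ Fu.mulVec (K.mulVec x0) ≤ bu ∧
        ∀ (ΔA : Matrix (Fin nx) (Fin nx) ℝ) (ΔB : Matrix (Fin nx) (Fin nu) ℝ)
          (w : Fin nx → ℝ), opInf ΔA ≤ εA → opInf ΔB ≤ εB → ‖w‖ ≤ σw →
          FT.mulVec ((Ahat + ΔA).mulVec x0 + (Bhat + ΔB).mulVec (K.mulVec x0) + w) ≤ bT) ↔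
      (∃ (K : Matrix (Fin nu) (Fin nx) ℝ) (σ0 : ℝ), 0 < σ0 ∧
        εA * ‖x0‖ + εB * ‖K.mulVec x0‖ + σw ≤ σ0 ∧
        Fx.mulVec x0 ≤ bx ∧ Fu.mulVec (K.mulVec x0) ≤ bu ∧
        ∀ i : Fin pT, FT i ⬝ᵥ (Ahat + Bhat * K).mulVec x0 + norm1 (FT i) * σ0 ≤ bT i) :=
  statement12_general nx nu px pu pT Ahat Bhat εA εB σw hεA hεB hσw Fx bx Fu bu FT bT x0
end
end
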